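/- Let b ≥ 2 and N ≥ 1 be integers. Then for all real numbers x and y, the generalized Sierpinski matrices satisfy S_{b,N}(x) · S_{b,N}(y) = S_{b,N}(x+y). -/

import Mathlib

/-- The generalized binomial coefficient `binom(x,k) = x(x-1)⋯(x-k+1)/k!`. -/
noncomputable def binom (x : ℝ) (k : ℕ) : ℝ :=
  (∏ i ∈ Finset.range k, (x - i)) / (Nat.factorial k)

/-- The generalized Sierpinski matrix `S_{b,1}(x)`, with `(j,k)`-entry
`binom(x+j-k-1, j-k)` for `k ≤ j` and `0` otherwise. -/
noncomputable def S1 (b : ℕ) (x : ℝ) : Matrix (Fin b) (Fin b) ℝ :=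
  Matrix.of fun j k =>
    if (k : ℕ) ≤ (j : ℕ) then binom (x + ((j : ℕ) - (k : ℕ)) - 1) ((j : ℕ) - (k : ℕ)) else 0

/-- The equivalence `Fin b × Fin (b^N) ≃ Fin (b^(N+1))`, `(p, r) ↦ p·b^N + r`, used to index
Kronecker products. -/
def pke (b N : ℕ) : Fin b × Fin (b ^ N) ≃ Fin (b ^ (N + 1)) :=
  finProdFinEquiv.trans (finCongr (by ring))

open Kronecker in
/-- The generalized Sierpinski matrices `S_{b,N}(x)`, defined recursively by
`S_{b,N+1}(x) = S_{b,1}(x) ⊗ S_{b,N}(x)` (Kronecker product). -/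
noncomputable def Smat (b : ℕ) (x : ℝ) : (N : ℕ) → Matrix (Fin (b ^ N)) (Fin (b ^ N)) ℝ
  | 0 => 1
  | N + 1 => Matrix.reindex (pke b N) (pke b N) (S1 b x ⊗ₖ Smat b x N)

/-!
`S_{b,1}(x)` is the lower-triangular Toeplitz matrix of the sequence `d ↦ binom(x+d-1, d)`, the
multiset coefficients of `x`, and multiplying such matrices convolves their sequences. Up to the
sign `(-1)^d`, the multiset coefficients of `x` are the binomial coefficients of `-x`, so
Chu–Vandermonde makes them a convolution semigroup in `x`; this is the case `N = 1`. The
mixed-product property of the Kronecker product carries it to every `N`.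
-/

open Finset Matrix Kronecker

theorem Ring.add_multichoose_eq {R : Type*} [CommRing R] [BinomialRing R] (r s : R) (n : ℕ) :
    Ring.multichoose (r + s) n =
      ∑ ij ∈ antidiagonal n, Ring.multichoose r ij.1 * Ring.multichoose s ij.2 := by
  have multichoose_eq_neg_one_pow_mul (t : R) (k : ℕ) :
      Ring.multichoose t k = (-1) ^ k * Ring.choose (-t) k := by
    rw [Ring.choose_neg', Units.smul_def, Int.coe_negOnePow_natCast, zsmul_eq_mul, ← mul_assoc]
    push_cast
    rw [← mul_pow, neg_one_mul, neg_neg, one_pow, one_mul]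
  rw [multichoose_eq_neg_one_pow_mul, neg_add, Ring.add_choose_eq n (Commute.all _ _), mul_sum]
  refine sum_congr rfl fun ij hij => ?_
  rw [multichoose_eq_neg_one_pow_mul, multichoose_eq_neg_one_pow_mul, ← mem_antidiagonal.mp hij,
    pow_add]
  ring

namespace Matrix

variable {R : Type*}

def lowerToeplitz [Zero R] (n : ℕ) (a : ℕ → R) : Matrix (Fin n) (Fin n) R :=
  of fun j k => if k ≤ j then a (j - k : ℕ) else 0

theorem lowerToeplitz_mul_lowerToeplitz [NonUnitalNonAssocSemiring R] (n : ℕ) (a c : ℕ → R) :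
    lowerToeplitz n a * lowerToeplitz n c =
      lowerToeplitz n fun d => ∑ ij ∈ antidiagonal d, a ij.1 * c ij.2 := by
  ext j k
  simp only [lowerToeplitz, mul_apply, of_apply]
  split_ifs with hkj
  · rw [Fin.le_def] at hkj
    have hj := j.isLt
    calc ∑ m : Fin n, (if m ≤ j then a (j - m : ℕ) else 0) * (if k ≤ m then c (m - k : ℕ) else 0)
        = ∑ m ∈ range n, if m ≤ j ∧ k ≤ m then a (j - m) * c (m - k) else 0 := by
          rw [← Fin.sum_univ_eq_sum_range]
          exact sum_congr rfl fun m _ => ite_zero_mul_ite_zero ..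
      _ = ∑ m ∈ Ico (k : ℕ) (j + 1), a (j - m) * c (m - k) := by
          rw [← sum_filter]
          congr 1
          ext m
          simp only [mem_filter, mem_range, mem_Ico]
          omega
      _ = ∑ i ∈ range (j - k + 1), a (j - k - i) * c i := by
          rw [sum_Ico_eq_sum_range, show (j : ℕ) + 1 - k = j - k + 1 by omega]
          refine sum_congr rfl fun i _ => ?_
          rw [Nat.add_sub_cancel_left, Nat.sub_add_eq]
      _ = ∑ ij ∈ antidiagonal (j - k : ℕ), a ij.1 * c ij.2 := by
          rw [← Nat.sum_antidiagonal_swap, Nat.sum_antidiagonal_eq_sum_range_succ_mk]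
          rfl
  · refine sum_eq_zero fun m _ => ?_
    rw [ite_zero_mul_ite_zero, if_neg]
    omega

end Matrix

theorem binom_eq_ringChoose (x : ℝ) (k : ℕ) : binom x k = Ring.choose x k := by
  have h := Ring.descPochhammer_eq_factorial_smul_choose x k
  rw [← Polynomial.aeval_eq_smeval, ← Polynomial.eval_map_algebraMap, descPochhammer_map,
    descPochhammer_eval_eq_prod_range, nsmul_eq_mul] at h
  rw [binom, h]
  field_simp

theorem S1_eq_lowerToeplitz (b : ℕ) (x : ℝ) : S1 b x = lowerToeplitz b (Ring.multichoose x) := by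
  ext j k
  simp only [S1, lowerToeplitz, of_apply, Fin.le_def]
  split_ifs with hkj
  · rw [Ring.multichoose_eq, binom_eq_ringChoose, Nat.cast_sub hkj]
  · rfl

theorem S1_mul_S1 (b : ℕ) (x y : ℝ) : S1 b x * S1 b y = S1 b (x + y) := by
  simp only [S1_eq_lowerToeplitz, lowerToeplitz_mul_lowerToeplitz]
  congr
  exact funext fun d => (Ring.add_multichoose_eq x y d).symm

theorem sierpinski_one_parameter_group_general (b N : ℕ) (x y : ℝ) :
    Smat b x N * Smat b y N = Smat b (x + y) N := by
  induction N with
  | zero => exact mul_one 1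
  | succ N ih =>
    simp only [Smat, reindex_apply, submatrix_mul_equiv, ← mul_kronecker_mul, S1_mul_S1, ih]

/-- The generalized Sierpinski matrices form a one-parameter group:
`S_{b,N}(x) · S_{b,N}(y) = S_{b,N}(x+y)`. -/
theorem sierpinski_one_parameter_group (b N : ℕ) (hb : 2 ≤ b) (hN : 1 ≤ N) (x y : ℝ) :
    Smat b x N * Smat b y N = Smat b (x + y) N :=
  sierpinski_one_parameter_group_general b N x y
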